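/- arXiv:1905.08977 — 5 statements merged into one kernel-verified Lean document; each statement's English description precedes it below -/
import Mathlib

section
/- Under a uniformly random permutation π of the ground set, the probability that min(π(A)) = min(π(B)) equals the Jaccard similarity |A∩B|/|A∪B| for any two finite nonempty sets A, B. -/
/-- Under a uniformly random permutation `π` of the finite ground set, the probability that
`min π(A) = min π(B)` equals the Jaccard similarity `|A ∩ B| / |A ∪ B|`. -/
theorem minhash_collision_prob {I : Type*} [Fintype I] [LinearOrder I]
    (A B : Finset I) (hA : A.Nonempty) (hB : B.Nonempty) :
    ((Finset.univ.filter (fun π : Equiv.Perm I =>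
        (A.image π).min' (hA.image π) = (B.image π).min' (hB.image π))).card : ℚ)
        / (Fintype.card (Equiv.Perm I) : ℚ)
      = ((A ∩ B).card : ℚ) / ((A ∪ B).card : ℚ) := by
  classical
  have hU : (A ∪ B).Nonempty := hA.mono Finset.subset_union_left
  set f : Equiv.Perm I → I :=
    fun π => π.symm (((A ∪ B).image π).min' (hU.image π)) with hf
  have hfmem : ∀ π : Equiv.Perm I, f π ∈ A ∪ B := by
    intro π
    have h := Finset.min'_mem ((A ∪ B).image π) (hU.image π)
    rw [Finset.mem_image] at h
    obtain ⟨w, hw, hww⟩ := h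
    simpa [hf, ← hww] using hw
  have hπf : ∀ π : Equiv.Perm I, π (f π) = ((A ∪ B).image π).min' (hU.image π) := by
    intro π; simp [hf]
  have key : ∀ π : Equiv.Perm I,
      ((A.image π).min' (hA.image π) = (B.image π).min' (hB.image π)) ↔ f π ∈ A ∩ B := by
    intro π
    constructor
    · intro h
      set m := (A.image π).min' (hA.image π) with hm
      have hmA : m ∈ A.image π := Finset.min'_mem _ _
      have hmB : m ∈ B.image π := h ▸ Finset.min'_mem _ _
      have hmU : ((A ∪ B).image π).min' (hU.image π) = m := by
        apply le_antisymm
        · exact Finset.min'_le _ _ (by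
            rw [Finset.image_union]; exact Finset.mem_union_left _ hmA)
        · apply Finset.le_min'
          intro y hy
          rw [Finset.image_union, Finset.mem_union] at hy
          rcases hy with hy | hy
          · exact Finset.min'_le _ _ hy
          · exact h ▸ Finset.min'_le _ _ hy
      have hfm : f π = π.symm m := by rw [hf]; simp [hmU]
      rw [Finset.mem_inter]
      constructor
      · obtain ⟨a, ha, hae⟩ := Finset.mem_image.mp hmA
        rw [hfm, ← hae]; simpa using ha
      · obtain ⟨b, hb, hbe⟩ := Finset.mem_image.mp hmB
        rw [hfm, ← hbe]; simpa using hb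
    · intro h
      rw [Finset.mem_inter] at h
      have hAm : π (f π) ∈ A.image π := Finset.mem_image_of_mem _ h.1
      have hBm : π (f π) ∈ B.image π := Finset.mem_image_of_mem _ h.2
      have hle : ∀ y ∈ (A ∪ B).image π, π (f π) ≤ y := by
        intro y hy
        rw [hπf]
        exact Finset.min'_le _ _ hy
      have h1 : (A.image π).min' (hA.image π) = π (f π) := by
        apply le_antisymm (Finset.min'_le _ _ hAm)
        apply Finset.le_min'
        intro y hy
        exact hle y (by rw [Finset.image_union]; exact Finset.mem_union_left _ hy)
      have h2 : (B.image π).min' (hB.image π) = π (f π) := by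
        apply le_antisymm (Finset.min'_le _ _ hBm)
        apply Finset.le_min'
        intro y hy
        exact hle y (by rw [Finset.image_union]; exact Finset.mem_union_right _ hy)
      rw [h1, h2]
  -- all fibers of f over A ∪ B have the same cardinality
  have hcard : ∀ w ∈ A ∪ B, ∀ w' ∈ A ∪ B,
      (Finset.univ.filter (fun π : Equiv.Perm I => f π = w)).card
        = (Finset.univ.filter (fun π : Equiv.Perm I => f π = w')).card := by
    intro w hw w' hw'
    set σ := Equiv.swap w w' with hσ
    have hσU : (A ∪ B).image σ = A ∪ B := by
      ext x
      simp only [Finset.mem_image]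
      constructor
      · rintro ⟨y, hy, rfl⟩
        rcases eq_or_ne y w with rfl | hyw
        · simpa [hσ, Equiv.swap_apply_left] using hw'
        rcases eq_or_ne y w' with rfl | hyw'
        · simpa [hσ, Equiv.swap_apply_right] using hw
        · simpa [hσ, Equiv.swap_apply_of_ne_of_ne hyw hyw'] using hy
      · intro hx
        refine ⟨σ x, ?_, by simp [hσ]⟩
        rcases eq_or_ne x w with rfl | hxw
        · simpa [hσ, Equiv.swap_apply_left] using hw'
        rcases eq_or_ne x w' with rfl | hxw'
        · simpa [hσ, Equiv.swap_apply_right] using hw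
        · simpa [hσ, Equiv.swap_apply_of_ne_of_ne hxw hxw'] using hx
    have himg : ∀ π : Equiv.Perm I, (A ∪ B).image (π * σ) = (A ∪ B).image π := by
      intro π
      have : ((π * σ : Equiv.Perm I) : I → I) = (π : I → I) ∘ (σ : I → I) := rfl
      rw [this, ← Finset.image_image, hσU]
    have hfswap : ∀ π : Equiv.Perm I, f (π * σ) = σ (f π) := by
      intro π
      have hm : ((A ∪ B).image (π * σ)).min' (hU.image _)
          = ((A ∪ B).image π).min' (hU.image _) := by
        congr 1
        exact himg π
      rw [hf]
      simp only [hm]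
      rw [Equiv.symm_apply_eq]
      simp [hσ, Equiv.Perm.mul_apply, Equiv.swap_apply_self, Equiv.apply_symm_apply]
    apply Finset.card_bij' (fun π _ => π * σ) (fun π _ => π * σ)
    · intro π hπ
      simp only [Finset.mem_filter, Finset.mem_univ, true_and] at hπ ⊢
      rw [hfswap, hπ, hσ, Equiv.swap_apply_left]
    · intro π hπ
      simp only [Finset.mem_filter, Finset.mem_univ, true_and] at hπ ⊢
      rw [hfswap, hπ, hσ, Equiv.swap_apply_right]
    · intro π _
      simp [hσ, mul_assoc]
    · intro π _
      simp [hσ, mul_assoc]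
  obtain ⟨w₀, hw₀⟩ := hU
  set c : ℕ := (Finset.univ.filter (fun π : Equiv.Perm I => f π = w₀)).card with hc
  have hnum : (Finset.univ.filter (fun π : Equiv.Perm I =>
      (A.image π).min' (hA.image π) = (B.image π).min' (hB.image π))).card
      = (A ∩ B).card * c := by
    rw [Finset.card_eq_sum_card_fiberwise (f := f) (t := A ∩ B)
      (fun π hπ => (key π).mp (Finset.mem_filter.mp hπ).2)]
    rw [Finset.sum_congr rfl (fun w hw => ?_), Finset.sum_const, smul_eq_mul]
    have : (Finset.univ.filter (fun π : Equiv.Perm I =>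
        (A.image π).min' (hA.image π) = (B.image π).min' (hB.image π))).filter
        (fun π => f π = w) = Finset.univ.filter (fun π : Equiv.Perm I => f π = w) := by
      rw [Finset.filter_filter]
      apply Finset.filter_congr
      intro π _
      constructor
      · exact fun h => h.2
      · intro h
        exact ⟨(key π).mpr (h ▸ hw), h⟩
    rw [this]
    exact hcard w (Finset.mem_union_left B (Finset.mem_inter.mp hw).1) w₀ hw₀
  have hden : Fintype.card (Equiv.Perm I) = (A ∪ B).card * c := by
    rw [← Finset.card_univ]
    rw [Finset.card_eq_sum_card_fiberwise (f := f) (t := A ∪ B) (fun π _ => hfmem π)]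
    rw [Finset.sum_congr rfl (fun w hw => ?_), Finset.sum_const, smul_eq_mul]
    have : Finset.univ.filter (fun π : Equiv.Perm I => f π = w)
        = (Finset.univ.filter (fun π : Equiv.Perm I => f π = w)) := rfl
    exact hcard w hw w₀ hw₀
  have hc0 : (c : ℚ) ≠ 0 := by
    have h : Fintype.card (Equiv.Perm I) ≠ 0 := Fintype.card_ne_zero
    rw [hden, Nat.mul_ne_zero_iff] at h
    exact_mod_cast h.2
  rw [hnum, hden]
  push_cast
  have hUne : ((A ∪ B).card : ℚ) ≠ 0 := by
    exact_mod_cast Finset.card_ne_zero_of_mem (Finset.mem_union_left _ hA.choose_spec)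
  field_simp
end

section
/- If X_1,...,X_k are i.i.d. Bernoulli random variables with success probability p = J + (1-J)/2^b, then the b-bit MinHash estimator Ĵ_b = (∑X_i/k - 1/2^b)/(1 - 1/2^b) is unbiased for J and has variance (1-J)(J + 1/(2^b - 1))/k. -/
/-!
`Ĵ_b` is an affine function of the binomial count `S = ∑ Xᵢ`, whose mean is `k p` and whose
variance is `k p (1 - p)`. With `c = 2⁻ᵇ` the collision probability `p = J + (1 - J) c` satisfies
`p - c = (1 - c) J` and `1 - p = (1 - c)(1 - J)`, so the mean of `Ĵ_b` is `J` and its variance is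
`p (1 - J) / ((1 - c) k)`, where `p / (1 - c) = J + 1 / (2ᵇ - 1)`.
-/

open MeasureTheory ProbabilityTheory

section ZeroOneValued

variable {Ω : Type*}

section Single

variable {X : Ω → ℝ}

lemma eq_indicator_one_of_zero_or_one (h01 : ∀ ω, X ω = 0 ∨ X ω = 1) :
    X = {ω | X ω = 1}.indicator 1 := by
  funext ω
  rcases h01 ω with h | h <;> simp [h]

lemma sq_eq_self_of_zero_or_one (h01 : ∀ ω, X ω = 0 ∨ X ω = 1) : X ^ 2 = X := by
  funext ω
  rcases h01 ω with h | h <;> simp [h]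

variable [MeasurableSpace Ω] {μ : Measure Ω}

lemma memLp_of_zero_or_one [IsFiniteMeasure μ] (hX : Measurable X)
    (h01 : ∀ ω, X ω = 0 ∨ X ω = 1) (q : ENNReal) : MemLp X q μ :=
  .of_bound hX.aestronglyMeasurable 1 <| ae_of_all _ fun ω => by
    rcases h01 ω with h | h <;> simp [h]

lemma integral_of_zero_or_one (hX : Measurable X) (h01 : ∀ ω, X ω = 0 ∨ X ω = 1) :
    ∫ ω, X ω ∂μ = μ.real {ω | X ω = 1} := by
  conv_lhs => rw [eq_indicator_one_of_zero_or_one h01]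
  exact integral_indicator_one (hX (measurableSet_singleton 1))

lemma variance_of_zero_or_one [IsProbabilityMeasure μ] (hX : Measurable X)
    (h01 : ∀ ω, X ω = 0 ∨ X ω = 1) :
    Var[X; μ] = μ.real {ω | X ω = 1} * (1 - μ.real {ω | X ω = 1}) := by
  rw [variance_eq_sub (memLp_of_zero_or_one hX h01 2), sq_eq_self_of_zero_or_one h01,
    integral_of_zero_or_one hX h01]
  ring

end Single

variable [MeasurableSpace Ω] {μ : Measure Ω} {ι : Type*} [Fintype ι] {X : ι → Ω → ℝ} {p : ℝ}

lemma integral_sum_of_zero_or_one [IsFiniteMeasure μ] (hX : ∀ i, Measurable (X i))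
    (h01 : ∀ i ω, X i ω = 0 ∨ X i ω = 1) (hp : ∀ i, μ.real {ω | X i ω = 1} = p) :
    ∫ ω, ∑ i, X i ω ∂μ = Fintype.card ι * p := by
  rw [integral_finsetSum _ fun i _ => (memLp_of_zero_or_one (hX i) (h01 i) 1).integrable le_rfl]
  simp [integral_of_zero_or_one (hX _) (h01 _), hp]

lemma variance_sum_of_zero_or_one [IsProbabilityMeasure μ] (hX : ∀ i, Measurable (X i))
    (h01 : ∀ i ω, X i ω = 0 ∨ X i ω = 1) (hind : Pairwise fun i j => X i ⟂ᵢ[μ] X j)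
    (hp : ∀ i, μ.real {ω | X i ω = 1} = p) :
    Var[fun ω => ∑ i, X i ω; μ] = Fintype.card ι * (p * (1 - p)) := by
  have hsum : (fun ω => ∑ i, X i ω) = ∑ i, X i := by
    funext ω
    simp only [Finset.sum_apply]
  rw [hsum, IndepFun.variance_sum (fun i _ => memLp_of_zero_or_one (hX i) (h01 i) 2)
    fun i _ j _ hij => hind hij]
  simp [variance_of_zero_or_one (hX _) (h01 _), hp]

end ZeroOneValued

lemma variance_div_const {Ω : Type*} [MeasurableSpace Ω] (μ : Measure Ω) (Y : Ω → ℝ) (c : ℝ) :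
    Var[fun ω => Y ω / c; μ] = Var[Y; μ] / c ^ 2 := by
  simp only [div_eq_mul_inv, variance_mul_const, inv_pow]

section Algebra

variable {q J k : ℝ}

lemma bbit_mean_identity (hq0 : q ≠ 0) (hq1 : q ≠ 1) (hk : k ≠ 0) :
    (k * (J + (1 - J) / q) / k - 1 / q) / (1 - 1 / q) = J := by
  have : q - 1 ≠ 0 := sub_ne_zero.mpr hq1
  field_simp
  ring

lemma bbit_variance_identity (hq0 : q ≠ 0) (hq1 : q ≠ 1) (hk : k ≠ 0) :
    k * ((J + (1 - J) / q) * (1 - (J + (1 - J) / q))) / k ^ 2 / (1 - 1 / q) ^ 2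
      = (1 - J) * (J + 1 / (q - 1)) / k := by
  have : q - 1 ≠ 0 := sub_ne_zero.mpr hq1
  field_simp
  ring

end Algebra

/-- If `X₁,…,X_k` are i.i.d. Bernoulli with success probability `p = J + (1-J)/2^b`, then the
b-bit MinHash estimator `Ĵ_b = (∑ Xᵢ/k - 1/2^b)/(1 - 1/2^b)` is unbiased for `J` and has
variance `(1-J)(J + 1/(2^b - 1))/k`. -/
theorem bbit_minhash_estimator {Ω : Type*} [MeasureSpace Ω]
    [IsProbabilityMeasure (ℙ : Measure Ω)]
    (b : ℕ) (hb : 1 ≤ b) (k : ℕ) (hk : 1 ≤ k)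
    (J : ℝ) (hJ : J ∈ Set.Icc (0 : ℝ) 1)
    (X : Fin k → Ω → ℝ) (hmeas : ∀ i, Measurable (X i))
    (h01 : ∀ i ω, X i ω = 0 ∨ X i ω = 1)
    (hBer : ∀ i, ℙ {ω | X i ω = 1} = ENNReal.ofReal (J + (1 - J) / 2 ^ b))
    (hind : iIndepFun X ℙ) :
    (∫ ω, ((∑ i, X i ω) / k - 1 / 2 ^ b) / (1 - 1 / 2 ^ b) ∂ℙ) = J ∧
      variance (fun ω => ((∑ i, X i ω) / k - 1 / 2 ^ b) / (1 - 1 / 2 ^ b)) ℙ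
        = (1 - J) * (J + 1 / (2 ^ b - 1)) / k := by
  have hp : ∀ i, (ℙ : Measure Ω).real {ω | X i ω = 1} = J + (1 - J) / 2 ^ b := fun i => by
    have : 0 ≤ (1 - J) / 2 ^ b := div_nonneg (by linarith [hJ.2]) (by positivity)
    rw [measureReal_def, hBer i, ENNReal.toReal_ofReal (by linarith [hJ.1])]
  have hq0 : (2 : ℝ) ^ b ≠ 0 := by positivity
  have hq1 : (2 : ℝ) ^ b ≠ 1 := (one_lt_pow₀ one_lt_two (by omega)).ne'
  have hk0 : (k : ℝ) ≠ 0 := Nat.cast_ne_zero.mpr (by omega)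
  have hS : Integrable (fun ω => ∑ i, X i ω) ℙ :=
    integrable_finsetSum _ fun i _ => (memLp_of_zero_or_one (hmeas i) (h01 i) 1).integrable le_rfl
  constructor
  · rw [integral_div, integral_sub (hS.div_const _) (integrable_const _), integral_div,
      integral_sum_of_zero_or_one hmeas h01 hp, integral_const]
    simpa using bbit_mean_identity hq0 hq1 hk0
  · rw [variance_div_const, variance_sub_const (hS.div_const _).aestronglyMeasurable,
      variance_div_const, variance_sum_of_zero_or_one hmeas h01 (fun _ _ hij => hind.indepFun hij) hp]
    simpa using bbit_variance_identity hq0 hq1 hk0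
end

section
/- Let A, B be finite sets with |A ∪ B| = n ≥ 2, and assign each element v of A ∪ B an independent geometric(1/2) random value r(v) on {0,1,2,...}. Let δ be the event that the maximum of r over A ∪ B is attained at a unique element and that element lies in the symmetric difference A △ B. Then P(δ) = α_n·(1 - J), where J = |A∩B|/|A∪B| and α_n = n·∑_{j=1}^∞ (1/2^{j+1})(1-1/2^j)^{n-1}. -/
/-! Condition on the value `j` of the maximum: by independence, `w` is the unique maximiser with
value `j` with probability `2^{-(j+1)} (1 - 2^{-j})^{n-1}`, so every element of `A ∪ B` is the
unique maximiser with the same probability `α_n / n`. These events are disjoint for distinct `w`,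
and `A △ B` has `n - |A ∩ B| = n (1 - J)` elements. -/

open MeasureTheory ProbabilityTheory Finset

lemma sum_range_one_div_two_pow_succ (j : ℕ) :
    ∑ k ∈ range j, (1 / 2 ^ (k + 1) : ℝ) = 1 - 1 / 2 ^ j := by
  induction j with
  | zero => simp
  | succ j ih => rw [sum_range_succ, ih, pow_succ]; ring

lemma one_sub_one_div_two_pow_nonneg (j : ℕ) : (0 : ℝ) ≤ 1 - 1 / 2 ^ j :=
  sub_nonneg.2 (div_le_one_of_le₀ (one_le_pow₀ one_le_two) (by positivity))

lemma summable_one_div_two_pow_succ_mul (m : ℕ) :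
    Summable fun j : ℕ => (1 / 2 ^ (j + 1) : ℝ) * (1 - 1 / 2 ^ j) ^ m := by
  refine Summable.of_nonneg_of_le (fun j => ?_) (fun j => ?_)
    (summable_geometric_two.mul_left (1 / 2))
  · exact mul_nonneg (by positivity) (pow_nonneg (one_sub_one_div_two_pow_nonneg j) m)
  · calc (1 / 2 ^ (j + 1) : ℝ) * (1 - 1 / 2 ^ j) ^ m ≤ 1 / 2 ^ (j + 1) :=
          mul_le_of_le_one_right (by positivity)
            (pow_le_one₀ (one_sub_one_div_two_pow_nonneg j) (by simp))
      _ = 1 / 2 * (1 / 2) ^ j := by rw [one_div_pow, pow_succ]; ring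

lemma ENNReal.one_div_two_pow_eq_ofReal (k : ℕ) :
    (1 / 2 : ENNReal) ^ k = ENNReal.ofReal (1 / 2 ^ k) := by
  rw [ENNReal.ofReal_div_of_pos (by positivity), ENNReal.ofReal_pow zero_le_two]
  simp [ENNReal.inv_pow]

section

variable {Ω ι : Type*} [MeasurableSpace Ω] {μ : Measure Ω}

lemma measure_lt_of_geometric_half {X : Ω → ℕ} (hX : Measurable X)
    (hgeom : ∀ j, μ {ω | X ω = j} = (1 / 2) ^ (j + 1)) (j : ℕ) :
    μ {ω | X ω < j} = ENNReal.ofReal (1 - 1 / 2 ^ j) := by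
  have hunion : {ω | X ω < j} = ⋃ k ∈ range j, {ω | X ω = k} := by ext; simp
  have hdisj : (range j : Set ℕ).PairwiseDisjoint fun k => {ω | X ω = k} :=
    fun a _ b _ hab => Set.disjoint_left.2 fun ω ha hb => hab (ha.symm.trans hb)
  rw [hunion, measure_biUnion_finset hdisj fun k _ => hX (measurableSet_singleton k),
    ← sum_range_one_div_two_pow_succ, ENNReal.ofReal_sum_of_nonneg fun k _ => by positivity]
  refine sum_congr rfl fun k _ => ?_
  rw [hgeom, ENNReal.one_div_two_pow_eq_ofReal]

lemma measure_forall_ne_lt_eq_tsum [Countable ι] {X : ι → Ω → ℕ} (hX : ∀ i, Measurable (X i)) (w : ι) :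
    μ {ω | ∀ u ≠ w, X u ω < X w ω} = ∑' j, μ {ω | X w ω = j ∧ ∀ u ≠ w, X u ω < j} := by
  have hunion : {ω | ∀ u ≠ w, X u ω < X w ω}
      = ⋃ j, {ω | X w ω = j ∧ ∀ u ≠ w, X u ω < j} := by
    ext ω; simp
  rw [hunion, measure_iUnion]
  · exact fun a b hab => Set.disjoint_left.2 fun ω ha hb => hab (ha.1.symm.trans hb.1)
  · intro j
    simp only [Set.ofPred_and, Set.ofPred_forall]
    exact (hX w (measurableSet_singleton j)).inter
      (.iInter fun u => .iInter fun _ => hX u measurableSet_Iio)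

lemma ProbabilityTheory.iIndepFun.measure_eq_and_forall_ne_lt [Fintype ι] [DecidableEq ι]
    {X : ι → Ω → ℕ} (hind : iIndepFun X μ) (w : ι) (j : ℕ) :
    μ {ω | X w ω = j ∧ ∀ u ≠ w, X u ω < j}
      = μ {ω | X w ω = j} * ∏ u ∈ univ.erase w, μ {ω | X u ω < j} := by
  let s : ι → Set ℕ := fun u => if u = w then {j} else Set.Iio j
  have hinter : {ω | X w ω = j ∧ ∀ u ≠ w, X u ω < j} = ⋂ u, X u ⁻¹' s u := by
    ext ω
    simp only [Set.mem_ofPred_eq, Set.mem_iInter, Set.mem_preimage, s]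
    refine ⟨fun ⟨hw, hu⟩ u => ?_,
      fun h => ⟨by simpa using h w, fun u hu => by simpa [hu] using h u⟩⟩
    split_ifs with h
    · simpa [h]
    · exact hu u h
  rw [hinter, hind.meas_iInter fun u => ⟨s u, by measurability, rfl⟩,
    ← mul_prod_erase univ _ (mem_univ w)]
  congr 1
  · simp [s, Set.preimage]
  · exact prod_congr rfl fun u hu => by simp [s, ne_of_mem_erase hu, Set.preimage]

lemma measure_forall_ne_lt_of_geometric_half [Fintype ι] {X : ι → Ω → ℕ}
    (hX : ∀ i, Measurable (X i)) (hgeom : ∀ i j, μ {ω | X i ω = j} = (1 / 2) ^ (j + 1))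
    (hind : iIndepFun X μ) (w : ι) :
    μ {ω | ∀ u ≠ w, X u ω < X w ω} = ENNReal.ofReal
      (∑' j : ℕ, (1 / 2 ^ (j + 1) : ℝ) * (1 - 1 / 2 ^ j) ^ (Fintype.card ι - 1)) := by
  classical
  rw [measure_forall_ne_lt_eq_tsum hX, ENNReal.ofReal_tsum_of_nonneg
    (fun j => mul_nonneg (by positivity) (pow_nonneg (one_sub_one_div_two_pow_nonneg j) _))
    (summable_one_div_two_pow_succ_mul _)]
  refine tsum_congr fun j => ?_
  rw [hind.measure_eq_and_forall_ne_lt, hgeom,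
    prod_congr rfl fun u _ => measure_lt_of_geometric_half (hX u) (hgeom u) j, prod_const,
    card_erase_of_mem (mem_univ w), card_univ, ENNReal.one_div_two_pow_eq_ofReal,
    ← ENNReal.ofReal_pow (one_sub_one_div_two_pow_nonneg j), ENNReal.ofReal_mul (by positivity)]

lemma measure_exists_forall_ne_lt_eq_sum {X : ι → Ω → ℕ} (hX : ∀ i, Measurable (X i))
    {S T : Finset ι} (hTS : T ⊆ S) :
    μ {ω | ∃ w ∈ T, ∀ u ∈ S, u ≠ w → X u ω < X w ω}
      = ∑ w ∈ T, μ {ω | ∀ u ∈ S, u ≠ w → X u ω < X w ω} := by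
  have hunion : {ω | ∃ w ∈ T, ∀ u ∈ S, u ≠ w → X u ω < X w ω}
      = ⋃ w ∈ T, {ω | ∀ u ∈ S, u ≠ w → X u ω < X w ω} := by
    ext ω; simp
  rw [hunion, measure_biUnion_finset]
  · exact fun a ha b hb hab => Set.disjoint_left.2 fun ω h₁ h₂ =>
      lt_asymm (h₁ b (hTS hb) (Ne.symm hab)) (h₂ a (hTS ha) hab)
  · intro w _
    simp only [Set.ofPred_forall]
    exact S.measurableSet_biInter fun u _ => .iInter fun _ => measurableSet_lt (hX u) (hX w)

end

lemma card_sdiff_union_sdiff {α : Type*} [DecidableEq α] (A B : Finset α) :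
    #(A \ B ∪ B \ A) = #(A ∪ B) - #(A ∩ B) := by
  rw [← Finset.symmDiff_def, symmDiff_eq_sup_sdiff_inf]
  exact card_sdiff_of_subset inter_subset_union

lemma Nat.cast_sub_eq_mul_one_sub_div {m n : ℕ} (h : m ≤ n) :
    ((n - m : ℕ) : ℝ) = n * (1 - m / n) := by
  rcases n.eq_zero_or_pos with rfl | hn
  · simp [Nat.le_zero.1 h]
  · rw [Nat.cast_sub h]
    field_simp

theorem delta_event_prob_general {Ω : Type*} [MeasureSpace Ω]
    {I : Type*} [DecidableEq I] (A B : Finset I)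
    (n : ℕ) (hn : (A ∪ B).card = n)
    (r : I → Ω → ℕ) (hmeas : ∀ v, Measurable (r v))
    (hgeom : ∀ v ∈ A ∪ B, ∀ j : ℕ, ℙ {ω | r v ω = j} = (1 / 2) ^ (j + 1))
    (hind : iIndepFun
      (fun v : ((A ∪ B : Finset I) : Type _) => r v.1) ℙ) :
    ℙ {ω | ∃ w ∈ (A \ B) ∪ (B \ A),
        (∀ v ∈ A ∪ B, r v ω ≤ r w ω) ∧ (∀ u ∈ A ∪ B, u ≠ w → r u ω < r w ω)}
      = ENNReal.ofReal
          (((n : ℝ) * ∑' j : ℕ, (1 / 2 ^ (j + 1) : ℝ) * (1 - 1 / 2 ^ j) ^ (n - 1))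
            * (1 - ((A ∩ B).card : ℝ) / ((A ∪ B).card : ℝ))) := by
  have hsub : A \ B ∪ B \ A ⊆ A ∪ B := union_subset_union sdiff_subset sdiff_subset
  have hevent : {ω | ∃ w ∈ (A \ B) ∪ (B \ A),
        (∀ v ∈ A ∪ B, r v ω ≤ r w ω) ∧ (∀ u ∈ A ∪ B, u ≠ w → r u ω < r w ω)}
      = {ω | ∃ w ∈ (A \ B) ∪ (B \ A), ∀ u ∈ A ∪ B, u ≠ w → r u ω < r w ω} := by
    ext ω
    simp only [Set.mem_ofPred_eq]
    refine exists_congr fun w => and_congr_right fun _ => and_iff_right_of_imp ?_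
    intro h v hv
    rcases eq_or_ne v w with rfl | hne
    exacts [le_rfl, (h v hv hne).le]
  have hstrict : ∀ w ∈ A ∪ B, ℙ {ω | ∀ u ∈ A ∪ B, u ≠ w → r u ω < r w ω}
      = ENNReal.ofReal (∑' j : ℕ, (1 / 2 ^ (j + 1) : ℝ) * (1 - 1 / 2 ^ j) ^ (n - 1)) := by
    intro w hw
    have := measure_forall_ne_lt_of_geometric_half (X := fun v : ↥(A ∪ B) => r v)
      (fun v => hmeas v) (fun v => hgeom v v.2) hind ⟨w, hw⟩
    simpa [Subtype.forall, hn] using this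
  rw [hevent, measure_exists_forall_ne_lt_eq_sum hmeas hsub,
    sum_congr rfl fun w hw => hstrict w (hsub hw), sum_const, card_sdiff_union_sdiff, hn,
    nsmul_eq_mul, ← ENNReal.ofReal_natCast, ← ENNReal.ofReal_mul (Nat.cast_nonneg _),
    Nat.cast_sub_eq_mul_one_sub_div (hn ▸ card_le_card inter_subset_union)]
  ring_nf

/-- For finite sets `A, B` with `|A ∪ B| = n ≥ 2` and independent geometric(1/2) log-ranks on
the elements of `A ∪ B`, the probability that the maximum log-rank over `A ∪ B` is attained at
a unique element which lies in the symmetric difference `A △ B` equals `α_n (1 - J)`, where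
`J = |A ∩ B| / |A ∪ B|` and `α_n = n ∑_{j≥1} (1/2^{j+1})(1 - 1/2^j)^{n-1}`. -/
theorem delta_event_prob {Ω : Type*} [MeasureSpace Ω]
    [IsProbabilityMeasure (ℙ : Measure Ω)]
    {I : Type*} [DecidableEq I] (A B : Finset I)
    (n : ℕ) (hn : (A ∪ B).card = n) (h2 : 2 ≤ n)
    (r : I → Ω → ℕ) (hmeas : ∀ v, Measurable (r v))
    (hgeom : ∀ v ∈ A ∪ B, ∀ j : ℕ, ℙ {ω | r v ω = j} = (1 / 2) ^ (j + 1))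
    (hind : iIndepFun
      (fun v : ((A ∪ B : Finset I) : Type _) => r v.1) ℙ) :
    ℙ {ω | ∃ w ∈ (A \ B) ∪ (B \ A),
        (∀ v ∈ A ∪ B, r v ω ≤ r w ω) ∧ (∀ u ∈ A ∪ B, u ≠ w → r u ω < r w ω)}
      = ENNReal.ofReal
          (((n : ℝ) * ∑' j : ℕ, (1 / 2 ^ (j + 1) : ℝ) * (1 - 1 / 2 ^ j) ^ (n - 1))
            * (1 - ((A ∩ B).card : ℝ) / ((A ∪ B).card : ℝ))) :=
  delta_event_prob_general A B n hn r hmeas hgeom hind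
end

section
/- With notation as in Theorem 1 of the MaxLogHash paper, P(δ = 1 ∧ max log-rank = j) = |A △ B|/2^{j+1} · (1 - 1/2^j)^{n-1}, where n = |A ∪ B| ≥ 2 and the event requires exactly one element w ∈ A △ B with r(w) = j and all other elements of A ∪ B having log-rank strictly less than j. -/
/-!
Fix `w ∈ A △ B`. The event "`r w = j` and every other `r u` is `< j`" is an intersection of
events about the independent ranks, so its probability is
`2^{-(j+1)} (1 - 2^{-j})^{n-1}`, the second factor because `P(r u < j) = 1 - 2^{-j}` for a
geometric(1/2) rank. For distinct `w` these events are disjoint (each says its `w` is the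
unique maximum), so the probability of their union is `|A △ B|` times that value.
-/

open MeasureTheory ProbabilityTheory

theorem ENNReal.one_sub_half_pow_add_half_pow_succ (k : ℕ) :
    1 - (1 / 2 : ENNReal) ^ k + (1 / 2) ^ (k + 1) = 1 - (1 / 2) ^ (k + 1) := by
  have hk : (1 / 2 : ENNReal) ^ k = (1 / 2) ^ (k + 1) + (1 / 2) ^ (k + 1) := by
    rw [pow_succ, ← mul_add, ENNReal.add_halves, mul_one]
  set b : ENNReal := (1 / 2) ^ (k + 1)
  have hbb : b + b ≤ 1 := hk ▸ pow_le_one' ENNReal.half_le_self k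
  have hb : b ≤ 1 - b :=
    ENNReal.le_sub_of_add_le_right (ENNReal.pow_ne_top (by simp)) hbb
  rw [hk, tsub_add_eq_tsub_tsub, tsub_add_cancel_of_le hb]

theorem measure_lt_eq_one_sub_half_pow {Ω : Type*} [MeasurableSpace Ω] {μ : Measure Ω}
    {X : Ω → ℕ} (hX : Measurable X)
    (hgeom : ∀ j, μ {ω | X ω = j} = (1 / 2) ^ (j + 1)) (j : ℕ) :
    μ {ω | X ω < j} = 1 - (1 / 2) ^ j := by
  induction j with
  | zero => simp
  | succ k ih =>
    have hsplit : {ω | X ω < k + 1} = {ω | X ω < k} ∪ {ω | X ω = k} := by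
      ext ω; simp only [Set.mem_ofPred_eq, Set.mem_union]; omega
    have hdisj : Disjoint {ω | X ω < k} {ω | X ω = k} :=
      Set.disjoint_left.2 fun ω (h₁ : X ω < k) (h₂ : X ω = k) => h₁.ne h₂
    rw [hsplit, measure_union hdisj (hX (measurableSet_singleton k)), ih, hgeom,
      ENNReal.one_sub_half_pow_add_half_pow_succ]

section SoleRank

variable {Ω I : Type*}

def soleRankEvent (r : I → Ω → ℕ) (s : Finset I) (j : ℕ) (w : I) : Set Ω :=
  {ω | r w ω = j ∧ ∀ u ∈ s, u ≠ w → r u ω < j}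

theorem soleRankEvent_eq_iInter [DecidableEq I] (r : I → Ω → ℕ) {s : Finset I} (j : ℕ) {w : I}
    (hw : w ∈ s) :
    soleRankEvent r s j w =
      ⋂ v : s, r v ⁻¹' (if (v : I) = w then {j} else Set.Iio j) := by
  ext ω
  simp only [soleRankEvent, Set.mem_ofPred_eq, Set.mem_iInter, Set.mem_preimage]
  constructor
  · rintro ⟨hwj, hlt⟩ ⟨v, hv⟩
    split_ifs with hvw
    · exact hvw ▸ hwj
    · exact hlt v hv hvw
  · intro h
    refine ⟨by simpa using h ⟨w, hw⟩, fun u hu huw => ?_⟩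
    simpa [huw] using h ⟨u, hu⟩

theorem measurableSet_soleRankEvent [MeasurableSpace Ω] {r : I → Ω → ℕ}
    (hr : ∀ v, Measurable (r v)) {s : Finset I} (j : ℕ) {w : I} (hw : w ∈ s) :
    MeasurableSet (soleRankEvent r s j w) := by
  classical
  rw [soleRankEvent_eq_iInter r j hw]
  exact .iInter fun v => hr v .of_discrete

theorem pairwiseDisjoint_soleRankEvent (r : I → Ω → ℕ) (s : Finset I) (j : ℕ) :
    (s : Set I).PairwiseDisjoint (soleRankEvent r s j) := by
  intro w hw w' _ hne
  refine Set.disjoint_left.2 fun ω ⟨hwj, _⟩ ⟨_, hlt⟩ => ?_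
  exact (hlt w hw hne).ne hwj

theorem measure_soleRankEvent [MeasurableSpace Ω] [DecidableEq I] {μ : Measure Ω}
    {r : I → Ω → ℕ} {s : Finset I}
    (hind : iIndepFun (fun v : s => r v) μ) (j : ℕ) {w : I} (hw : w ∈ s) :
    μ (soleRankEvent r s j w) =
      μ {ω | r w ω = j} * ∏ u ∈ s.erase w, μ {ω | r u ω < j} := by
  let S : I → Set ℕ := fun v => if v = w then {j} else Set.Iio j
  have hprod := hind.measure_inter_preimage_eq_mul Finset.univ
    (sets := fun v : s => S v) fun _ _ => .of_discrete
  simp only [Finset.mem_univ, Set.iInter_true] at hprod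
  rw [soleRankEvent_eq_iInter r j hw, hprod,
    Finset.prod_coe_sort s fun u => μ (r u ⁻¹' S u), ← Finset.mul_prod_erase s _ hw]
  congr 1
  · simp [S, Set.preimage, Set.mem_singleton_iff]
  · refine Finset.prod_congr rfl fun u hu => ?_
    simp [S, (Finset.mem_erase.1 hu).1, Set.preimage]

end SoleRank

theorem delta_and_max_rank_prob_general {Ω : Type*} [MeasureSpace Ω]
    {I : Type*} [DecidableEq I] (A B : Finset I)
    (n : ℕ) (hn : (A ∪ B).card = n)
    (r : I → Ω → ℕ) (hmeas : ∀ v, Measurable (r v))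
    (hgeom : ∀ v ∈ A ∪ B, ∀ j : ℕ, ℙ {ω | r v ω = j} = (1 / 2) ^ (j + 1))
    (hind : iIndepFun
      (fun v : ((A ∪ B : Finset I) : Type _) => r v.1) ℙ)
    (j : ℕ) :
    ℙ {ω | ∃ w ∈ (A \ B) ∪ (B \ A),
        r w ω = j ∧ ∀ u ∈ A ∪ B, u ≠ w → r u ω < j}
      = ((((A \ B) ∪ (B \ A)).card : ENNReal) / 2 ^ (j + 1))
          * (1 - (1 / 2) ^ j) ^ (n - 1) := by
  set D := (A \ B) ∪ (B \ A)
  have hD : D ⊆ A ∪ B := Finset.union_subset_union Finset.sdiff_subset Finset.sdiff_subset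
  have hevent : {ω | ∃ w ∈ D, r w ω = j ∧ ∀ u ∈ A ∪ B, u ≠ w → r u ω < j} =
      ⋃ w ∈ D, soleRankEvent r (A ∪ B) j w := by
    ext ω; simp only [soleRankEvent, Set.mem_ofPred_eq, Set.mem_iUnion₂, exists_prop]
  have hsole : ∀ w ∈ A ∪ B,
      ℙ (soleRankEvent r (A ∪ B) j w) = (1 / 2) ^ (j + 1) * (1 - (1 / 2) ^ j) ^ (n - 1) := by
    intro w hw
    rw [measure_soleRankEvent hind j hw, hgeom w hw,
      Finset.prod_congr rfl fun u hu => measure_lt_eq_one_sub_half_pow (hmeas u)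
        (hgeom u (Finset.mem_of_mem_erase hu)) j,
      Finset.prod_const, Finset.card_erase_of_mem hw, hn]
  rw [hevent, measure_biUnion_finset
      ((pairwiseDisjoint_soleRankEvent r _ j).subset (by exact_mod_cast hD))
      fun w hw => measurableSet_soleRankEvent hmeas j (hD hw),
    Finset.sum_congr rfl fun w hw => hsole w (hD hw), Finset.sum_const, nsmul_eq_mul,
    ← mul_assoc, one_div, ← ENNReal.inv_pow, ← div_eq_mul_inv]

/-- With independent geometric(1/2) log-ranks on `A ∪ B` and `n = |A ∪ B| ≥ 2`, the probability
that exactly one element `w ∈ A △ B` has log-rank `j` while all other elements of `A ∪ B` have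
log-rank strictly less than `j` equals `(|A △ B| / 2^{j+1}) (1 - 1/2^j)^{n-1}`. -/
theorem delta_and_max_rank_prob {Ω : Type*} [MeasureSpace Ω]
    [IsProbabilityMeasure (ℙ : Measure Ω)]
    {I : Type*} [DecidableEq I] (A B : Finset I)
    (n : ℕ) (hn : (A ∪ B).card = n) (h2 : 2 ≤ n)
    (r : I → Ω → ℕ) (hmeas : ∀ v, Measurable (r v))
    (hgeom : ∀ v ∈ A ∪ B, ∀ j : ℕ, ℙ {ω | r v ω = j} = (1 / 2) ^ (j + 1))
    (hind : iIndepFun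
      (fun v : ((A ∪ B : Finset I) : Type _) => r v.1) ℙ)
    (j : ℕ) :
    ℙ {ω | ∃ w ∈ (A \ B) ∪ (B \ A),
        r w ω = j ∧ ∀ u ∈ A ∪ B, u ≠ w → r u ω < j}
      = ((((A \ B) ∪ (B \ A)).card : ENNReal) / 2 ^ (j + 1))
          * (1 - (1 / 2) ^ j) ^ (n - 1) :=
  delta_and_max_rank_prob_general A B n hn r hmeas hgeom hind j
end

section
/- Under a uniformly random injective hash of a finite ground set into the reals with continuous i.i.d. values, P(max_{v∈A} h(v) = max_{v∈B} h(v)) = |A∩B|/|A∪B| for finite nonempty sets A, B. -/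
/-!
Off the null event of ties, the two maxima agree exactly when the maximum of `h` over `A ∪ B`
is attained in `A ∩ B`. Since the joint law of the i.i.d. values is invariant under permuting
coordinates, the almost surely unique argmax over `A ∪ B` is uniformly distributed on `A ∪ B`.
-/

open MeasureTheory ProbabilityTheory

def strictArgmax {ι α : Type*} [LinearOrder α] (i : ι) : Set (ι → α) :=
  {x | ∀ j, j ≠ i → x j < x i}

section LinearOrder

variable {ι α : Type*} [LinearOrder α]

lemma disjoint_strictArgmax {i j : ι} (hij : i ≠ j) :
    Disjoint (strictArgmax i : Set (ι → α)) (strictArgmax j) :=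
  Set.disjoint_left.2 fun _ hi hj => (hi j hij.symm).asymm (hj i hij)

lemma preimage_comp_strictArgmax (σ : ι ≃ ι) (i : ι) :
    (fun x : ι → α => x ∘ σ) ⁻¹' strictArgmax i = strictArgmax (σ i) := by
  ext x
  simp only [strictArgmax, Set.mem_preimage, Set.mem_ofPred_eq, Function.comp_apply]
  rw [σ.forall_congr_left]
  simp [Equiv.symm_apply_eq]

lemma mem_iUnion_strictArgmax [Finite ι] [Nonempty ι] {x : ι → α} (hx : x.Injective) :
    x ∈ ⋃ i, strictArgmax i := by
  obtain ⟨i, hi⟩ := Finite.exists_max x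
  exact Set.mem_iUnion.2 ⟨i, fun j hj => (hi j).lt_of_ne (hx.ne hj)⟩

lemma Finset.sup'_eq_sup'_iff_of_injOn [DecidableEq ι] {A B : Finset ι}
    (hA : A.Nonempty) (hB : B.Nonempty) {x : ι → α} (hx : Set.InjOn x ↑(A ∪ B)) :
    A.sup' hA x = B.sup' hB x ↔ ∃ v ∈ A ∩ B, ∀ u ∈ A ∪ B, u ≠ v → x u < x v := by
  constructor
  · intro hAB
    obtain ⟨a, ha, hxa⟩ := Finset.exists_mem_eq_sup' hA x
    obtain ⟨b, hb, hxb⟩ := Finset.exists_mem_eq_sup' hB x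
    have hab : a = b := hx (by simp [ha]) (by simp [hb]) (by rw [← hxa, ← hxb, hAB])
    subst hab
    refine ⟨a, Finset.mem_inter.2 ⟨ha, hb⟩, fun u hu hua => ?_⟩
    refine lt_of_le_of_ne ?_ (hx.ne hu (by simp [ha]) hua)
    rcases Finset.mem_union.1 hu with huA | huB
    · exact hxa ▸ Finset.le_sup' x huA
    · exact hxb ▸ Finset.le_sup' x huB
  · rintro ⟨v, hv, hmax⟩
    have hsup : ∀ (C : Finset ι) (hC : C.Nonempty), C ⊆ A ∪ B → v ∈ C → C.sup' hC x = x v :=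
      fun C hC hCS hvC => le_antisymm
        (Finset.sup'_le hC x fun u hu => by
          rcases eq_or_ne u v with rfl | huv
          · rfl
          · exact (hmax u (hCS hu) huv).le)
        (Finset.le_sup' x hvC)
    rw [Finset.mem_inter] at hv
    rw [hsup A hA Finset.subset_union_left hv.1, hsup B hB Finset.subset_union_right hv.2]

lemma domRestrict_mem_strictArgmax_iff {s : Set ι} {x : ι → α} (v : s) :
    s.domRestrict x ∈ strictArgmax v ↔ ∀ u ∈ s, u ≠ v → x u < x v := by
  simp [strictArgmax, Subtype.ext_iff, Set.domRestrict_apply]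

end LinearOrder

section Measure

variable {ι α : Type*} [LinearOrder α] [TopologicalSpace α] [OrderClosedTopology α]
  [SecondCountableTopology α] [MeasurableSpace α] [OpensMeasurableSpace α]

lemma measurableSet_strictArgmax [Finite ι] (i : ι) :
    MeasurableSet (strictArgmax i : Set (ι → α)) := by
  have : (strictArgmax i : Set (ι → α)) = ⋂ j, ⋂ (_ : j ≠ i), {x | x j < x i} := by
    ext; simp [strictArgmax]
  rw [this]
  exact .iInter fun j => .iInter fun _ =>
    measurableSet_lt (measurable_pi_apply j) (measurable_pi_apply i)

lemma measurableSet_forall_lt {Ω : Type*} [MeasurableSpace Ω] {s : Finset ι} {X : ι → Ω → α}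
    (hX : ∀ i, Measurable (X i)) {v : ι} (hv : v ∈ s) :
    MeasurableSet {ω | ∀ u ∈ s, u ≠ v → X u ω < X v ω} := by
  convert measurableSet_preimage (measurable_pi_lambda (fun ω (u : s) => X u ω) fun u => hX u)
    (measurableSet_strictArgmax (⟨v, hv⟩ : s)) using 1
  ext ω
  exact (domRestrict_mem_strictArgmax_iff (x := (X · ω)) ⟨v, hv⟩).symm

lemma MeasureTheory.Measure.pi_strictArgmax_eq [Fintype ι] [DecidableEq ι] (μ : Measure α)
    [SigmaFinite μ] (i j : ι) :
    Measure.pi (fun _ : ι => μ) (strictArgmax i) =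
      Measure.pi (fun _ : ι => μ) (strictArgmax j) := by
  have hswap : MeasurePreserving (fun x : ι → α => x ∘ Equiv.swap i j)
      (Measure.pi fun _ => μ) (Measure.pi fun _ => μ) := by
    convert measurePreserving_arrowCongr' (fun _ : ι => μ) (fun _ => μ) (Equiv.swap i j)
      (MeasurableEquiv.refl α) fun _ => MeasurePreserving.id μ using 1
    ext x
    simp [MeasurableEquiv.arrowCongr', Equiv.arrowCongr', Equiv.arrowCongr]
  rw [← hswap.measure_preimage (measurableSet_strictArgmax i).nullMeasurableSet,
    preimage_comp_strictArgmax, Equiv.swap_apply_left]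

end Measure

lemma MeasureTheory.Measure.prod_diagonal_eq_zero {α : Type*} [MeasurableSpace α]
    [MeasurableEq α] (μ ν : Measure α) [SFinite ν] [NullSingletonClass ν] :
    μ.prod ν (Set.diagonal α) = 0 := by
  rw [Measure.prod_apply measurableSet_diagonal]
  simp [Set.diagonal]

namespace ProbabilityTheory

variable {Ω ι : Type*} [MeasurableSpace Ω] {P : Measure Ω}

lemma IndepFun.measure_eq_eq_zero {α : Type*} [MeasurableSpace α] [MeasurableEq α]
    [IsFiniteMeasure P] {X Y : Ω → α} (hX : Measurable X) (hY : Measurable Y)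
    (hXY : IndepFun X Y P) [NullSingletonClass (P.map Y)] : P {ω | X ω = Y ω} = 0 := by
  change P ((fun ω => (X ω, Y ω)) ⁻¹' Set.diagonal α) = 0
  rw [← Measure.map_apply (hX.prodMk hY) measurableSet_diagonal,
    hXY.map_prod_eq_prod_map_map hX.aemeasurable hY.aemeasurable]
  exact Measure.prod_diagonal_eq_zero _ _

lemma ae_injective_of_pairwise_indepFun {α : Type*} [MeasurableSpace α] [MeasurableEq α]
    [Countable ι] [IsFiniteMeasure P] {X : ι → Ω → α} (hX : ∀ i, Measurable (X i))
    (hind : Pairwise fun i j => IndepFun (X i) (X j) P) [∀ i, NullSingletonClass (P.map (X i))] :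
    ∀ᵐ ω ∂P, Function.Injective fun i => X i ω := by
  have hne : ∀ i j, i ≠ j → ∀ᵐ ω ∂P, X i ω ≠ X j ω := fun i j hij =>
    ae_iff.2 (by simpa using (hind hij).measure_eq_eq_zero (hX i) (hX j))
  have hall : ∀ᵐ ω ∂P, ∀ i j, i ≠ j → X i ω ≠ X j ω := by
    simpa only [ae_all_iff, Filter.eventually_imp_distrib_left] using hne
  filter_upwards [hall] with ω hω i j
  exact not_imp_not.1 (hω i j)

lemma map_eq_restrict_Icc_of_cdf [IsProbabilityMeasure P] {X : Ω → ℝ} (hX : Measurable X)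
    (hcdf : ∀ t ∈ Set.Icc (0 : ℝ) 1, P {ω | X ω ≤ t} = ENNReal.ofReal t) :
    P.map X = volume.restrict (Set.Icc 0 1) := by
  have := Measure.isProbabilityMeasure_map (μ := P) hX.aemeasurable
  have : IsProbabilityMeasure (volume.restrict (Set.Icc (0 : ℝ) 1)) := ⟨by simp⟩
  refine Measure.ext_of_Iic _ _ fun t => ?_
  have hIcc : Set.Iic t ∩ Set.Icc 0 1 = Set.Icc 0 (min t 1) := by
    ext; simp only [Set.mem_inter_iff, Set.mem_Iic, Set.mem_Icc, le_min_iff]; tauto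
  rw [Measure.map_apply hX measurableSet_Iic, Measure.restrict_apply measurableSet_Iic, hIcc,
    Real.volume_Icc, sub_zero]
  change P {ω | X ω ≤ t} = _
  rcases lt_or_ge t 0 with ht | ht
  · rw [ENNReal.ofReal_of_nonpos (min_le_of_left_le ht.le)]
    refine measure_mono_null (fun ω (hω : X ω ≤ t) => ?_) ((hcdf 0 (by simp)).trans (by simp))
    exact hω.trans ht.le
  rcases le_or_gt t 1 with ht1 | ht1
  · rw [min_eq_left ht1]
    exact hcdf t ⟨ht, ht1⟩
  · rw [min_eq_right ht1.le, ENNReal.ofReal_one]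
    refine le_antisymm prob_le_one ?_
    calc 1 = P {ω | X ω ≤ 1} := by simp [hcdf 1]
      _ ≤ P {ω | X ω ≤ t} := measure_mono fun ω (hω : X ω ≤ 1) => hω.trans ht1.le

section LinearOrder

variable {α : Type*} [LinearOrder α] [TopologicalSpace α] [OrderClosedTopology α]
  [SecondCountableTopology α] [MeasurableSpace α] [OpensMeasurableSpace α]
  [IsProbabilityMeasure P] {μ : Measure α} [SigmaFinite μ] [NullSingletonClass μ]

lemma measure_strictArgmax_of_iIndepFun [Fintype ι] {X : ι → Ω → α}
    (hX : ∀ i, Measurable (X i)) (hind : iIndepFun X P) (hident : ∀ i, P.map (X i) = μ) (i : ι) :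
    P {ω | (fun j => X j ω) ∈ strictArgmax i} = (Fintype.card ι : ENNReal)⁻¹ := by
  classical
  set E : ι → Set Ω := fun i => (fun ω j => X j ω) ⁻¹' strictArgmax i
  have hXvec : Measurable fun ω j => X j ω := measurable_pi_lambda _ hX
  have hE : ∀ i, MeasurableSet (E i) := fun i => hXvec (measurableSet_strictArgmax i)
  have hlaw : P.map (fun ω j => X j ω) = Measure.pi fun _ => μ := by
    simp_rw [hind.map_fun_eq_pi_map fun i => (hX i).aemeasurable, hident]
  have hsymm : ∀ j, P (E j) = P (E i) := fun j => by
    simp only [E, ← Measure.map_apply hXvec (measurableSet_strictArgmax _), hlaw,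
      Measure.pi_strictArgmax_eq μ j i]
  have hcover : P (⋃ j, E j) = 1 := by
    have : Nonempty ι := ⟨i⟩
    have : ∀ j, NullSingletonClass (P.map (X j)) := fun j => hident j ▸ inferInstance
    have hinj := ae_injective_of_pairwise_indepFun hX fun j k hjk => hind.indepFun hjk
    refine (prob_compl_eq_zero_iff (.iUnion hE)).1 (measure_mono_null ?_ (ae_iff.1 hinj))
    exact fun ω hω hω' => hω (by simpa [E] using mem_iUnion_strictArgmax hω')
  have hsum : P (E i) * Fintype.card ι = 1 := by
    rw [← hcover, measure_iUnion (fun j k hjk => (disjoint_strictArgmax hjk).preimage _) hE,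
      tsum_fintype, Finset.sum_congr rfl fun j _ => hsymm j, Finset.sum_const, nsmul_eq_mul,
      Finset.card_univ, mul_comm]
  exact ENNReal.eq_inv_of_mul_eq_one_left hsum

lemma measure_forall_lt_of_iIndepFun {s : Finset ι} {X : ι → Ω → α}
    (hX : ∀ i, Measurable (X i)) (hind : iIndepFun (fun i : s => X i) P)
    (hident : ∀ i : s, P.map (X i) = μ) {v : ι} (hv : v ∈ s) :
    P {ω | ∀ u ∈ s, u ≠ v → X u ω < X v ω} = (s.card : ENNReal)⁻¹ := by
  rw [← Fintype.card_coe,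
    ← measure_strictArgmax_of_iIndepFun (fun u : s => hX u) hind hident ⟨v, hv⟩]
  congr 1
  ext ω
  exact (domRestrict_mem_strictArgmax_iff (x := (X · ω)) ⟨v, hv⟩).symm

end LinearOrder

end ProbabilityTheory

/-- With i.i.d. Uniform(0,1) (hence a.s. tie-free) hash values on the ground set,
`P(max_{v∈A} h(v) = max_{v∈B} h(v)) = |A ∩ B| / |A ∪ B|` for finite nonempty `A, B`. -/
theorem max_hash_collision_prob {Ω : Type*} [MeasureSpace Ω]
    [IsProbabilityMeasure (ℙ : Measure Ω)]
    {I : Type*} [DecidableEq I] (A B : Finset I) (hA : A.Nonempty) (hB : B.Nonempty)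
    (h : I → Ω → ℝ) (hmeas : ∀ v, Measurable (h v))
    (hunif : ∀ v ∈ A ∪ B, ∀ t ∈ Set.Icc (0 : ℝ) 1, ℙ {ω | h v ω ≤ t} = ENNReal.ofReal t)
    (hind : iIndepFun
      (fun v : ((A ∪ B : Finset I) : Type _) => h v.1) ℙ) :
    ℙ {ω | A.sup' hA (fun v => h v ω) = B.sup' hB (fun v => h v ω)}
      = ((A ∩ B).card : ENNReal) / ((A ∪ B).card : ENNReal) := by
  set S := A ∪ B
  set E : I → Set Ω := fun v => {ω | ∀ u ∈ S, u ≠ v → h u ω < h v ω}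
  have hlaw : ∀ v : S, Measure.map (h v) ℙ = volume.restrict (Set.Icc (0 : ℝ) 1) := fun v =>
    map_eq_restrict_Icc_of_cdf (hmeas v) (hunif v v.2)
  have hinj : ∀ᵐ ω ∂ℙ, Set.InjOn (h · ω) S := by
    have : ∀ v : S, NullSingletonClass (Measure.map (h v) ℙ) := fun v => hlaw v ▸ inferInstance
    filter_upwards [ae_injective_of_pairwise_indepFun (fun v : S => hmeas v)
      fun u v huv => hind.indepFun huv] with ω hω
    exact Set.injOn_iff_injective.2 hω
  have hevent : {ω | A.sup' hA (h · ω) = B.sup' hB (h · ω)} =ᵐ[ℙ] ⋃ v ∈ A ∩ B, E v := by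
    refine Filter.eventuallyEq_set.2 ?_
    filter_upwards [hinj] with ω hω
    simpa only [Set.mem_iUnion₂, exists_prop, E, Set.mem_ofPred_eq] using
      Finset.sup'_eq_sup'_iff_of_injOn hA hB hω
  have hdisj : Set.PairwiseDisjoint ↑(A ∩ B) E := fun v hv w hw hvw =>
    Set.disjoint_left.2 fun ω hωv hωw =>
      (hωv w (Finset.inter_subset_union hw) hvw.symm).asymm
        (hωw v (Finset.inter_subset_union hv) hvw)
  calc ℙ {ω | A.sup' hA (h · ω) = B.sup' hB (h · ω)}
      = ∑ v ∈ A ∩ B, ℙ (E v) := by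
        rw [measure_congr hevent, measure_biUnion_finset hdisj fun v hv =>
          measurableSet_forall_lt hmeas (Finset.inter_subset_union hv)]
    _ = (A ∩ B).card * (S.card : ENNReal)⁻¹ := by
        rw [Finset.sum_congr rfl fun v hv => measure_forall_lt_of_iIndepFun hmeas hind hlaw
          (Finset.inter_subset_union hv), Finset.sum_const, nsmul_eq_mul]
end
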